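/- Let G be a graph with a perfect matching M. Then M is the unique fractional perfect matching of G if and only if the associated local digraph ldg(G, M) is acyclic. -/

import Mathlib

/-!
A locally directed closed walk in `ldg(G, M)` is the same thing as a closed walk
`a₀ b₀ a₁ b₁ ⋯` in `G` alternating between edges `aᵢbᵢ ∉ M` and matching edges `bᵢaᵢ₊₁`: at each
matching edge the walk must enter and leave through endpoints of different signs, i.e. through
both endpoints. Given such a cycle of length `t`, moving weight `1/t` from its matching edges to
its other edges keeps every vertex sum at `1`, so `M` is not the unique fractional perfect
matching. Conversely, if `w ≠ M` is one, some edge `ab ∉ M` has `w(ab) > 0`; then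
`w(b f(b)) < 1`, so `f(b)` carries another edge `f(b) c ∉ M` of positive weight. Iterating this
step in the finite graph eventually closes an alternating cycle.
-/

/-- A locally directed graph (here without a looplessness requirement): a multigraph
together with a sign (`Bool`) for each incident vertex–edge pair. -/
structure LocalDigraph (V E : Type*) where
  fst : E → V
  snd : E → V
  sgnFst : E → Bool
  sgnSnd : E → Bool

namespace LocalDigraph

variable {V E : Type*} [DecidableEq V]

/-- The sign of edge `e` at an incident vertex `x`. -/
def sgn (G : LocalDigraph V E) (x : V) (e : E) : Bool :=
  if x = G.fst e then G.sgnFst e else G.sgnSnd e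

/-- A locally directed closed walk of length `t`. -/
def IsClosedWalk (G : LocalDigraph V E) {t : ℕ} (v : ZMod t → V) (e : ZMod t → E) : Prop :=
  ∀ i : ZMod t,
    ((G.fst (e i) = v i ∧ G.snd (e i) = v (i + 1)) ∨
      (G.snd (e i) = v i ∧ G.fst (e i) = v (i + 1))) ∧
    G.sgn (v i) (e i) ≠ G.sgn (v i) (e (i - 1))

/-- A local digraph is acyclic if it has no locally directed closed walk. -/
def Acyclic (G : LocalDigraph V E) : Prop :=
  ¬ ∃ (t : ℕ) (_ : 0 < t) (v : ZMod t → V) (e : ZMod t → E), G.IsClosedWalk v e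

end LocalDigraph

/-- Given signs `σ` for the vertices and the matching involution `f`, `rep σ f x` is the
distinguished (`+`-signed) endpoint of the matching edge containing `x`, which
represents that matching edge. -/
def rep {V : Type*} (σ : V → Bool) (f : V → V) (x : V) : V := if σ x then x else f x

/-- The local digraph `ldg(G, M)` associated to a graph `G` with a perfect matching `M`:
vertices are (represented by) matching edges, edges are the edges of `G` outside `M`,
and the sign of such an edge at a matching edge is the sign `σ` of the endpoint it uses. -/
def ldg {V : Type*} [DecidableEq V] (G : SimpleGraph V) (M : G.Subgraph)
    (σ : V → Bool) (f : V → V) :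
    LocalDigraph V {p : V × V // G.Adj p.1 p.2 ∧ ¬ M.Adj p.1 p.2} where
  fst e := rep σ f e.1.1
  snd e := rep σ f e.1.2
  sgnFst e := σ e.1.1
  sgnSnd e := σ e.1.2

open Classical in
/-- `w` is a fractional perfect matching of `G`: a `[0,1]`-valued weight on edges with
total weight `1` at every vertex. -/
noncomputable def IsFPM {V : Type*} [Fintype V] (G : SimpleGraph V) (w : Sym2 V → ℝ) : Prop :=
  (∀ e, 0 ≤ w e) ∧ (∀ e, w e ≤ 1) ∧ (∀ e, e ∉ G.edgeSet → w e = 0) ∧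
    ∀ v : V, ∑ e ∈ Finset.univ.filter (fun e : Sym2 V => v ∈ e), w e = 1

open Classical in
/-- The indicator weight function of the matching `M`. -/
noncomputable def matchInd {V : Type*} {G : SimpleGraph V} (M : G.Subgraph) : Sym2 V → ℝ :=
  fun e => if e ∈ M.edgeSet then 1 else 0

section FractionalPerfectMatching

open Finset SimpleGraph

variable {V : Type*} {G : SimpleGraph V} {M : G.Subgraph} {f : V → V}

section Partner

variable (hM : M.IsMatching) (hf : ∀ v, M.Adj v (f v))
include hM hf

lemma matching_adj_iff {u v : V} : M.Adj u v ↔ v = f u :=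
  ⟨fun h => hM.eq_of_adj_left h (hf u), fun h => h ▸ hf u⟩

lemma partner_partner (x : V) : f (f x) = x :=
  ((matching_adj_iff hM hf).1 (hf x).symm).symm

omit hM in
lemma partner_ne (x : V) : f x ≠ x :=
  (M.adj_sub (hf x)).ne'

end Partner

section Rep

variable {σ : V → Bool} (hM : M.IsMatching) (hf : ∀ v, M.Adj v (f v))
  (hσ : ∀ u v, M.Adj u v → σ u ≠ σ v)
include hM hf hσ

lemma rep_partner (x : V) : rep σ f (f x) = rep σ f x := by
  have hs := hσ x (f x) (hf x)
  unfold rep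
  cases hx : σ x <;> cases hfx : σ (f x) <;> simp_all [partner_partner hM hf x]

lemma rep_eq_rep_iff {x y : V} : rep σ f x = rep σ f y ↔ x = y ∨ x = f y := by
  refine ⟨fun h => ?_, by rintro (rfl | rfl) <;> simp [rep_partner hM hf hσ]⟩
  have hinv : Function.Involutive f := partner_partner hM hf
  unfold rep at h
  cases hx : σ x <;> cases hy : σ y <;> simp_all [hinv.injective.eq_iff, hinv.eq_iff]

lemma rep_ne_rep_of_adj {x y : V} (hG : G.Adj x y) (hxy : ¬ M.Adj x y) :
    rep σ f x ≠ rep σ f y := by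
  rw [Ne, rep_eq_rep_iff hM hf hσ, ← matching_adj_iff hM hf]
  rintro (rfl | h)
  exacts [hG.ne rfl, hxy h.symm]

end Rep

/-- `p i = (aᵢ, bᵢ)` encodes the closed walk `a₀ b₀ a₁ b₁ ⋯` of `G` that alternates between
edges `aᵢbᵢ ∉ M` and matching edges `bᵢaᵢ₊₁ = bᵢ f(bᵢ)`. -/
def IsAlternatingCycle (G : SimpleGraph V) (M : G.Subgraph) (f : V → V) {t : ℕ}
    (p : ZMod t → V × V) : Prop :=
  ∀ i, G.Adj (p i).1 (p i).2 ∧ ¬ M.Adj (p i).1 (p i).2 ∧ (p (i + 1)).1 = f (p i).2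

section LocalDigraph

variable [DecidableEq V] {σ : V → Bool} (hM : M.IsMatching) (hf : ∀ v, M.Adj v (f v))
  (hσ : ∀ u v, M.Adj u v → σ u ≠ σ v)
include hM hf hσ

lemma ldg_sgn_rep {e : {p : V × V // G.Adj p.1 p.2 ∧ ¬ M.Adj p.1 p.2}} {z : V}
    (hz : z = e.1.1 ∨ z = e.1.2) : (ldg G M σ f).sgn (rep σ f z) e = σ z := by
  have hne := rep_ne_rep_of_adj hM hf hσ e.2.1 e.2.2
  rcases hz with rfl | rfl
  · simp [LocalDigraph.sgn, ldg]
  · simp [LocalDigraph.sgn, ldg, hne.symm]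

lemma exists_isAlternatingCycle_of_isClosedWalk {t : ℕ} {v : ZMod t → V}
    {e : ZMod t → {p : V × V // G.Adj p.1 p.2 ∧ ¬ M.Adj p.1 p.2}}
    (hwalk : (ldg G M σ f).IsClosedWalk v e) :
    ∃ p : ZMod t → V × V, IsAlternatingCycle G M f p := by
  have horient : ∀ i, ∃ q : V × V, (q = (e i).1 ∨ q = (e i).1.swap) ∧
      rep σ f q.1 = v i ∧ rep σ f q.2 = v (i + 1) := fun i => by
    rcases (hwalk i).1 with ⟨h1, h2⟩ | ⟨h1, h2⟩
    exacts [⟨_, .inl rfl, h1, h2⟩, ⟨_, .inr rfl, h1, h2⟩]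
  choose p hpe hp₁ hp₂ using horient
  have hends : ∀ i, ((p i).1 = (e i).1.1 ∨ (p i).1 = (e i).1.2) ∧
      ((p i).2 = (e i).1.1 ∨ (p i).2 = (e i).1.2) := fun i => by
    rcases hpe i with h | h <;> simp [h]
  refine ⟨p, fun i => ⟨?_, ?_, ?_⟩⟩
  · rcases hpe i with h | h <;> simp only [h, Prod.fst_swap, Prod.snd_swap]
    exacts [(e i).2.1, (e i).2.1.symm]
  · rcases hpe i with h | h <;> simp only [h, Prod.fst_swap, Prod.snd_swap]
    exacts [(e i).2.2, fun h' => (e i).2.2 h'.symm]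
  · -- `aᵢ₊₁` and `bᵢ` lie on the matching edge `v (i + 1)` and have different signs there
    have hsgn := (hwalk (i + 1)).2
    rw [← hp₁, ldg_sgn_rep hM hf hσ (hends _).1, add_sub_cancel_right, hp₁, ← hp₂,
      ldg_sgn_rep hM hf hσ (hends i).2] at hsgn
    rcases (rep_eq_rep_iff hM hf hσ).1 ((hp₁ _).trans (hp₂ i).symm) with h | h
    exacts [absurd (congrArg σ h) hsgn, h]

lemma exists_isClosedWalk_of_isAlternatingCycle {t : ℕ} {p : ZMod t → V × V}
    (hp : IsAlternatingCycle G M f p) : ∃ v e, (ldg G M σ f).IsClosedWalk (t := t) v e := by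
  have hedge : ∀ i, G.Adj (p i).1 (p i).2 ∧ ¬ M.Adj (p i).1 (p i).2 :=
    fun i => ⟨(hp i).1, (hp i).2.1⟩
  refine ⟨fun i => rep σ f (p i).1, fun i => ⟨p i, hedge i⟩, fun i => ?_⟩
  have hprev : rep σ f (p i).1 = rep σ f (p (i - 1)).2 := by
    rw [← sub_add_cancel i 1, (hp (i - 1)).2.2, rep_partner hM hf hσ, sub_add_cancel]
  refine ⟨.inl ⟨rfl, ?_⟩, ?_⟩
  · show rep σ f (p i).2 = rep σ f (p (i + 1)).1
    rw [(hp i).2.2, rep_partner hM hf hσ]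
  · beta_reduce
    rw [ldg_sgn_rep hM hf hσ (e := ⟨p i, hedge i⟩) (.inl rfl), hprev,
      ldg_sgn_rep hM hf hσ (e := ⟨p (i - 1), hedge _⟩) (.inr rfl)]
    have := (hp (i - 1)).2.2
    rw [sub_add_cancel] at this
    rw [this]
    exact (hσ _ _ (hf _)).symm

lemma ldg_acyclic_iff : (ldg G M σ f).Acyclic ↔
    ¬ ∃ t, 0 < t ∧ ∃ p : ZMod t → V × V, IsAlternatingCycle G M f p := by
  refine not_congr ⟨fun ⟨t, ht, v, e, hwalk⟩ => ⟨t, ht, ?_⟩, fun ⟨t, ht, p, hp⟩ => ?_⟩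
  · exact exists_isAlternatingCycle_of_isClosedWalk hM hf hσ hwalk
  · exact ⟨t, ht, exists_isClosedWalk_of_isAlternatingCycle hM hf hσ hp⟩

end LocalDigraph

lemma Finite.exists_zmod_orbit {α : Type*} [Finite α] [Nonempty α] (g : α → α) :
    ∃ t, 0 < t ∧ ∃ x : ZMod t → α, ∀ i, x (i + 1) = g (x i) := by
  obtain ⟨y, t, ht, hy⟩ : ∃ y t, 0 < t ∧ Function.IsPeriodicPt g t y := by
    obtain ⟨x₀⟩ := ‹Nonempty α›
    obtain ⟨m, n, hmn, heq⟩ : ∃ m n, m < n ∧ g^[m] x₀ = g^[n] x₀ := by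
      obtain ⟨m, n, hne, heq⟩ := Finite.exists_ne_map_eq_of_infinite (fun k => g^[k] x₀)
      rcases hne.lt_or_gt with h | h
      exacts [⟨m, n, h, heq⟩, ⟨n, m, h, heq.symm⟩]
    refine ⟨g^[m] x₀, n - m, by omega, ?_⟩
    rw [Function.IsPeriodicPt, Function.IsFixedPt, ← Function.iterate_add_apply,
      Nat.sub_add_cancel hmn.le, heq]
  have : NeZero t := ⟨ht.ne'⟩
  refine ⟨t, ht, fun i => g^[i.val] y, fun i => ?_⟩
  have hval : (i + 1).val = (i.val + 1) % t := by
    rw [← ZMod.val_natCast, Nat.cast_succ, ZMod.natCast_zmod_val]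
  simp only [hval, hy.iterate_mod_apply, Function.iterate_succ_apply']

section FractionalMatching

variable [Fintype V] [DecidableEq V] {w : Sym2 V → ℝ}

lemma IsFPM.sum_incident_eq_one (hw : IsFPM G w) (x : V) : ∑ e with x ∈ e, w e = 1 := by
  convert hw.2.2.2 x

lemma IsFPM.of_nonneg (h0 : ∀ e, 0 ≤ w e) (hG : ∀ e ∉ G.edgeSet, w e = 0)
    (hsum : ∀ x, ∑ e with x ∈ e, w e = 1) : IsFPM G w := by
  refine ⟨h0, fun e => ?_, hG, fun x => by convert hsum x⟩
  obtain ⟨x, y⟩ := e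
  calc w s(x, y) ≤ ∑ e with x ∈ e, w e :=
        single_le_sum (fun e _ => h0 e) (by simp)
    _ = 1 := hsum x

lemma sum_incident_eq_of_forall_ne (x : V) {z : Sym2 V} (hz : x ∈ z)
    (h : ∀ y, s(x, y) ≠ z → w s(x, y) = 0) : ∑ e with x ∈ e, w e = w z := by
  refine sum_eq_single_of_mem z (by simpa) fun e he hne => ?_
  obtain ⟨y, rfl⟩ := Sym2.mem_iff_exists.1 (mem_filter.1 he).2
  exact h y hne

lemma sum_incident_ite_eq (u : V) {x y : V} (hxy : x ≠ y) :
    ∑ e with u ∈ e, (if e = s(x, y) then (1 : ℝ) else 0) =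
      (if x = u then 1 else 0) + (if y = u then 1 else 0) := by
  simp only [sum_ite_eq', mem_filter, mem_univ, true_and]
  by_cases hx : x = u <;> by_cases hy : y = u <;> simp_all [eq_comm]

end FractionalMatching

section PerfectMatching

variable [Fintype V] [DecidableEq V] {w : Sym2 V → ℝ} (hM : M.IsMatching)
  (hf : ∀ v, M.Adj v (f v))
include hM hf

lemma sum_incident_matchInd (u : V) : ∑ e with u ∈ e, matchInd M e = 1 := by
  rw [sum_incident_eq_of_forall_ne u (Sym2.mem_mk_left u (f u)) fun y hy => ?_]
  · simp [matchInd, hf u]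
  · rw [matchInd, if_neg]
    rw [Subgraph.mem_edgeSet, matching_adj_iff hM hf]
    rintro rfl
    exact hy rfl

lemma IsFPM.exists_pos_of_lt_one (hw : IsFPM G w) {x : V} (hlt : w s(x, f x) < 1) :
    ∃ y, G.Adj x y ∧ ¬ M.Adj x y ∧ 0 < w s(x, y) := by
  by_contra! h
  refine hlt.ne (.trans ?_ (hw.sum_incident_eq_one x))
  refine (sum_incident_eq_of_forall_ne x (Sym2.mem_mk_left x (f x)) fun y hy => ?_).symm
  by_cases hG : G.Adj x y
  · have hxy : ¬ M.Adj x y := fun hxy => hy (by rw [(matching_adj_iff hM hf).1 hxy])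
    exact (h y hG hxy).antisymm (hw.1 _)
  · exact hw.2.2.1 _ hG

lemma IsFPM.exists_pos_of_pos (hw : IsFPM G w) {a b : V} (hab : ¬ M.Adj a b)
    (hpos : 0 < w s(a, b)) : ∃ c, G.Adj (f b) c ∧ ¬ M.Adj (f b) c ∧ 0 < w s(f b, c) := by
  refine hw.exists_pos_of_lt_one hM hf ?_
  have hne : s(a, b) ≠ s(b, f b) := by
    rw [Ne, Sym2.eq_swap, Sym2.eq_iff]
    rintro (⟨-, h⟩ | ⟨h, -⟩)
    exacts [hab (h ▸ hf b).symm, partner_ne hf b h.symm]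
  have hsum := add_le_sum (s := {e | b ∈ e}) (fun e _ => hw.1 e) (by simp) (by simp) hne
  rw [hw.sum_incident_eq_one] at hsum
  rw [partner_partner hM hf, Sym2.eq_swap]
  linarith

lemma IsFPM.exists_pos_of_ne_matchInd (hw : IsFPM G w) (hne : w ≠ matchInd M) :
    ∃ a b, G.Adj a b ∧ ¬ M.Adj a b ∧ 0 < w s(a, b) := by
  obtain ⟨⟨x, y⟩, hxy⟩ := Function.ne_iff.1 hne
  by_cases hM' : M.Adj x y
  · obtain rfl := (matching_adj_iff hM hf).1 hM'
    have hlt : w s(x, f x) < 1 := (hw.2.1 _).lt_of_ne (by simpa [matchInd, hM'] using hxy)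
    exact ⟨x, hw.exists_pos_of_lt_one hM hf hlt⟩
  · have h0 : w s(x, y) ≠ 0 := by simpa [matchInd, hM'] using hxy
    exact ⟨x, y, by_contra fun hG => h0 (hw.2.2.1 _ hG), hM', (hw.1 _).lt_of_ne' h0⟩

lemma exists_isAlternatingCycle_of_ne_matchInd (hw : IsFPM G w) (hne : w ≠ matchInd M) :
    ∃ t, 0 < t ∧ ∃ p : ZMod t → V × V, IsAlternatingCycle G M f p := by
  let P := {q : V × V // G.Adj q.1 q.2 ∧ ¬ M.Adj q.1 q.2 ∧ 0 < w s(q.1, q.2)}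
  obtain ⟨a, b, hab⟩ := hw.exists_pos_of_ne_matchInd hM hf hne
  have : Nonempty P := ⟨⟨(a, b), hab⟩⟩
  have hsucc (q : P) : ∃ r : P, r.1.1 = f q.1.2 := by
    obtain ⟨c, hc⟩ := hw.exists_pos_of_pos hM hf q.2.2.1 q.2.2.2
    exact ⟨⟨(f q.1.2, c), hc⟩, rfl⟩
  choose g hg using hsucc
  obtain ⟨t, ht, x, hx⟩ := Finite.exists_zmod_orbit g
  exact ⟨t, ht, fun i => (x i).1, fun i => ⟨(x i).2.1, (x i).2.2.1, by simp only [hx, hg]⟩⟩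

end PerfectMatching

section CycleFlow

variable [DecidableEq V] {t : ℕ} [NeZero t] {p : ZMod t → V × V}

def cycleFlow (f : V → V) (p : ZMod t → V × V) (e : Sym2 V) : ℝ :=
  ∑ i, ((if e = s((p i).1, (p i).2) then 1 else 0) - (if e = s((p i).2, f (p i).2) then 1 else 0))

lemma sum_incident_cycleFlow [Fintype V] (hf : ∀ v, M.Adj v (f v)) (hp : IsAlternatingCycle G M f p)
    (u : V) : ∑ e with u ∈ e, cycleFlow f p e = 0 := by
  have hshift :
      ∑ i, (if f (p i).2 = u then (1 : ℝ) else 0) = ∑ i, if (p i).1 = u then 1 else 0 := by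
    simp only [← (hp _).2.2]
    exact Equiv.sum_comp (Equiv.addRight 1) fun i => if (p i).1 = u then (1 : ℝ) else 0
  simp only [cycleFlow]
  rw [sum_comm]
  simp only [sum_sub_distrib, sum_incident_ite_eq u (hp _).1.ne,
    sum_incident_ite_eq u (partner_ne hf _).symm, sum_add_distrib, hshift]
  ring

lemma cycleFlow_eq_zero_of_notMem_edgeSet (hf : ∀ v, M.Adj v (f v))
    (hp : IsAlternatingCycle G M f p) {e : Sym2 V} (he : e ∉ G.edgeSet) : cycleFlow f p e = 0 :=
  sum_eq_zero fun i _ => by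
    rw [if_neg fun (h : e = _) => he (h ▸ (hp i).1),
      if_neg fun (h : e = _) => he (h ▸ M.adj_sub (hf _)), sub_zero]

/-- Only matching edges lose weight, and at most `1` per step of the cycle. -/
lemma neg_mul_matchInd_le_cycleFlow (hf : ∀ v, M.Adj v (f v)) (hp : IsAlternatingCycle G M f p)
    (e : Sym2 V) : -(t * matchInd M e) ≤ cycleFlow f p e := by
  have hterm : ∀ i, -matchInd M e ≤ (if e = s((p i).1, (p i).2) then 1 else 0) -
      (if e = s((p i).2, f (p i).2) then 1 else 0) := fun i => by
    by_cases hmem : e ∈ M.edgeSet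
    · have hne : e ≠ s((p i).1, (p i).2) := fun h => (hp i).2.1 (by rwa [h] at hmem)
      simp only [matchInd, if_pos hmem, if_neg hne]
      split_ifs <;> norm_num
    · have hne : e ≠ s((p i).2, f (p i).2) := fun h => hmem (h ▸ hf _)
      simp only [matchInd, if_neg hmem, if_neg hne]
      split_ifs <;> norm_num
  calc -(t * matchInd M e) = ∑ _i : ZMod t, -matchInd M e := by simp
    _ ≤ cycleFlow f p e := sum_le_sum fun i _ => hterm i

lemma cycleFlow_pos (hf : ∀ v, M.Adj v (f v)) (hp : IsAlternatingCycle G M f p) :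
    0 < cycleFlow f p s((p 0).1, (p 0).2) := by
  have hterm : ∀ i, (if s((p 0).1, (p 0).2) = s((p i).2, f (p i).2) then (1 : ℝ) else 0) = 0 :=
    fun i => if_neg fun h => (hp 0).2.1 (by rw [← Subgraph.mem_edgeSet, h]; exact hf _)
  refine sum_pos' (fun i _ => ?_) ⟨0, mem_univ _, ?_⟩ <;> rw [hterm, sub_zero]
  · split_ifs <;> norm_num
  · rw [if_pos rfl]
    exact one_pos

lemma exists_isFPM_ne_matchInd [Fintype V] (hM : M.IsMatching) (hf : ∀ v, M.Adj v (f v))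
    (hp : IsAlternatingCycle G M f p) : ∃ w, IsFPM G w ∧ w ≠ matchInd M := by
  have ht : (0 : ℝ) < t := by exact_mod_cast Nat.pos_of_neZero t
  refine ⟨fun e => matchInd M e + (t : ℝ)⁻¹ * cycleFlow f p e, .of_nonneg (fun e => ?_)
    (fun e he => ?_) (fun u => ?_), fun h => ?_⟩
  · have := mul_le_mul_of_nonneg_left (neg_mul_matchInd_le_cycleFlow hf hp e) (inv_nonneg.2 ht.le)
    rw [mul_neg, inv_mul_cancel_left₀ ht.ne'] at this
    linarith
  · have hM' : e ∉ M.edgeSet := fun h => he (M.edgeSet_subset h)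
    rw [cycleFlow_eq_zero_of_notMem_edgeSet hf hp he, matchInd, if_neg hM', mul_zero, add_zero]
  · rw [sum_add_distrib, ← mul_sum, sum_incident_matchInd hM hf, sum_incident_cycleFlow hf hp,
      mul_zero, add_zero]
  · have := congrFun h s((p 0).1, (p 0).2)
    exact (mul_pos (inv_pos.2 ht) (cycleFlow_pos hf hp)).ne' (by linarith)

end CycleFlow

end FractionalPerfectMatching

/-- Let `M` be a perfect matching of `G` (with endpoints of every matching edge labelled
by opposite signs `σ`, the matching pairing being `f`). Then `M` is the unique fractional
perfect matching of `G` if and only if the local digraph `ldg(G, M)` is acyclic. -/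
theorem stmt9 {V : Type*} [Fintype V] [DecidableEq V] (G : SimpleGraph V)
    (M : G.Subgraph) (hM : M.IsPerfectMatching)
    (σ : V → Bool) (f : V → V)
    (hf : ∀ v, M.Adj v (f v)) (hσ : ∀ u v, M.Adj u v → σ u ≠ σ v) :
    (∀ w, IsFPM G w → w = matchInd M) ↔ (ldg G M σ f).Acyclic := by
  rw [ldg_acyclic_iff hM.1 hf hσ]
  constructor
  · rintro huniq ⟨t, ht, p, hp⟩
    have : NeZero t := ⟨ht.ne'⟩
    obtain ⟨w, hw, hne⟩ := exists_isFPM_ne_matchInd hM.1 hf hp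
    exact hne (huniq w hw)
  · intro hacyc w hw
    by_contra hne
    exact hacyc (exists_isAlternatingCycle_of_ne_matchInd hM.1 hf hw hne)
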